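/- arXiv:1710.09771 — 2 statements merged into one kernel-verified Lean document; each statement's English description precedes it below -/
import Mathlib

section
/- Suppose b and σ satisfy the Lipschitz assumption and x* is a periodic solution of the DDE with orbit 𝐎. Let μ > 0, let M_μ > 0 satisfy |b(φ)| + |σ(φ)|² ≤ M_μ for all φ in the closure of 𝐁(𝐎,2μ), let η ∈ (0,μ/4), and let 0 < S < μ/(4M_μ). Then every x ∈ C([-τ,S],ℝ^d) with x₀ ∈ 𝐒(𝐎,μ) and sup_{0≤s≤S} d₀(𝐎, x_s) ≥ 2μ − η satisfies I_S(x) ≥ μ²/(32 S M_μ). -/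
open MeasureTheory Set Metric
open scoped ENNReal

noncomputable section

/-- `ℝ^d`. -/
abbrev Vec (d : ℕ) := EuclideanSpace ℝ (Fin d)

/-- The state space `𝐂 = C([-τ,0],ℝ^d)`. -/
abbrev Hist (τ : ℝ) (d : ℕ) := C(Icc (-τ) (0:ℝ), Vec d)

/-- The path space `C([-τ,T],ℝ^d)`. -/
abbrev Traj (τ T : ℝ) (d : ℕ) := C(Icc (-τ) T, Vec d)

/-- Matrix acting on a vector. -/
def matVec {d m : ℕ} (M : Matrix (Fin d) (Fin m) ℝ) (v : Vec m) : Vec d :=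
  WithLp.toLp 2 (fun i => ∑ j, M i j * v j)

/-- Squared Frobenius norm of a matrix. -/
def frobSq {d m : ℕ} (M : Matrix (Fin d) (Fin m) ℝ) : ℝ := ∑ i, ∑ j, (M i j) ^ 2

/-- Frobenius norm of a matrix. -/
def frobNorm {d m : ℕ} (M : Matrix (Fin d) (Fin m) ℝ) : ℝ := Real.sqrt (frobSq M)

/-- Evaluation of a path at a time `t ∈ [-τ,T]` (clamped). -/
def ev {d : ℕ} {τ T : ℝ} (h : -τ ≤ T) (x : Traj τ T d) (t : ℝ) : Vec d :=
  x (projIcc (-τ) T h t)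

/-- The history segment `x_t ∈ 𝐂` of a path `x ∈ C([-τ,T],ℝ^d)`, for `t ∈ [0,T]`. -/
def seg {d : ℕ} {τ T : ℝ} (h : -τ ≤ T) (x : Traj τ T d) (t : ℝ) : Hist τ d :=
  ⟨fun s => x (projIcc (-τ) T h (t + s.1)),
    x.continuous.comp <| continuous_projIcc.comp <| continuous_const.add continuous_subtype_val⟩

/-- The uniform Lipschitz assumption on the coefficients:
`|b(φ)−b(ψ)|² + |σ(φ)−σ(ψ)|² ≤ κ₁ ‖φ−ψ‖²`. -/
def LipCoeff {d m : ℕ} {τ : ℝ} (b : Hist τ d → Vec d)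
    (σ' : Hist τ d → Matrix (Fin d) (Fin m) ℝ) (κ₁ : ℝ) : Prop :=
  ∀ φ ψ : Hist τ d, ‖b φ - b ψ‖ ^ 2 + frobSq (σ' φ - σ' ψ) ≤ κ₁ * ‖φ - ψ‖ ^ 2

/-- The linear growth bound `|b(φ)|² + |σ(φ)|² ≤ κ₂ (1 + ‖φ‖²)`. -/
def GrowthCoeff {d m : ℕ} {τ : ℝ} (b : Hist τ d → Vec d)
    (σ' : Hist τ d → Matrix (Fin d) (Fin m) ℝ) (κ₂ : ℝ) : Prop :=
  ∀ φ : Hist τ d, ‖b φ‖ ^ 2 + frobSq (σ' φ) ≤ κ₂ * (1 + ‖φ‖ ^ 2)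

/-- The set `U_T(x)` of controls `u ∈ L²([0,T],ℝ^m)` satisfying
`x(t) = x(0) + ∫₀ᵗ b(x_s) ds + ∫₀ᵗ σ(x_s) u(s) ds` for `t ∈ [0,T]`. -/
def controls {d m : ℕ} {τ T : ℝ} (h : -τ ≤ T) (b : Hist τ d → Vec d)
    (σ' : Hist τ d → Matrix (Fin d) (Fin m) ℝ) (x : Traj τ T d) : Set (ℝ → Vec m) :=
  {u | MemLp u 2 (volume.restrict (Icc 0 T)) ∧
    ∀ t ∈ Icc (0:ℝ) T,
      ev h x t = ev h x 0 + (∫ s in (0:ℝ)..t, b (seg h x s)) +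
        ∫ s in (0:ℝ)..t, matVec (σ' (seg h x s)) (u s)}

/-- The rate function `I_T(x) = inf_{u ∈ U_T(x)} ½∫₀ᵀ |u(s)|² ds` (with value `∞` if
`U_T(x) = ∅`). -/
def rate {d m : ℕ} {τ T : ℝ} (h : -τ ≤ T) (b : Hist τ d → Vec d)
    (σ' : Hist τ d → Matrix (Fin d) (Fin m) ℝ) (x : Traj τ T d) : ℝ≥0∞ :=
  ⨅ (u : ℝ → Vec m) (_ : u ∈ controls h b σ' x),
    ENNReal.ofReal ((1/2) * ∫ s in (0:ℝ)..T, ‖u s‖ ^ 2)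

open Classical in
/-- The rate function `I_T^φ(x)`, which is `I_T(x)` if `x₀ = φ` and `∞` otherwise. -/
def rateAt {d m : ℕ} {τ T : ℝ} (h : -τ ≤ T) (b : Hist τ d → Vec d)
    (σ' : Hist τ d → Matrix (Fin d) (Fin m) ℝ) (φ : Hist τ d) (x : Traj τ T d) : ℝ≥0∞ :=
  if seg h x 0 = φ then rate h b σ' x else ⊤

/-- The history segment `x_t ∈ 𝐂` of a function `x ∈ C(ℝ,ℝ^d)` (used for functions on
`[-τ,∞)`, extended continuously to `ℝ`). -/
def segF {d : ℕ} (τ : ℝ) (x : C(ℝ, Vec d)) (t : ℝ) : Hist τ d :=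
  ⟨fun s => x (t + s.1), x.continuous.comp <| continuous_const.add continuous_subtype_val⟩

/-- `x` is a solution of the DDE `x(t) = x(0) + ∫₀ᵗ b(x_s) ds`, `t ≥ 0`. -/
def IsDDESol {d : ℕ} (τ : ℝ) (b : Hist τ d → Vec d) (x : C(ℝ, Vec d)) : Prop :=
  ∀ t : ℝ, 0 ≤ t → x t = x 0 + ∫ s in (0:ℝ)..t, b (segF τ x s)

/-- `x` is a periodic solution of the DDE with period `p`. -/
def IsPeriodicSol {d : ℕ} (τ : ℝ) (b : Hist τ d → Vec d) (x : C(ℝ, Vec d)) (p : ℝ) : Prop :=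
  IsDDESol τ b x ∧ 0 < p ∧ ∀ t : ℝ, -τ ≤ t → x (t + p) = x t

/-- The orbit `𝐎 = {x*_t : t ∈ [0,p)} ⊂ 𝐂` of a periodic solution. -/
def orbit {d : ℕ} (τ : ℝ) (x : C(ℝ, Vec d)) (p : ℝ) : Set (Hist τ d) :=
  (segF τ x) '' Ico 0 p

/-- Uniform ellipticity of `a = σσ'`: `ν' a(φ) ν ≥ c |ν|²`. -/
def UnifElliptic {d : ℕ} {τ : ℝ} (σ' : Hist τ d → Matrix (Fin d) (Fin d) ℝ) (c : ℝ) : Prop :=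
  ∀ (φ : Hist τ d) (ν : Fin d → ℝ),
    c * (∑ i, ν i ^ 2) ≤ dotProduct ν ((σ' φ * Matrix.transpose (σ' φ)).mulVec ν)

/-!
Let `s_c` be the first time at which the distance of `x_s` from the orbit reaches `2μ - η`; up to
`s_c` the coefficients are bounded by `M_μ`. Comparing `x_{s_c}` with `x*_{t₀ + s_c}`, where
`x*_{t₀}` is almost closest to `x₀`, and using that `x*` moves with speed at most `M_μ`, shows
that `x` itself is displaced by at least `μ/2` at some time `t ≤ s_c`. For any control `u` the
drift accounts for at most `M_μ t ≤ μ/4` of this displacement, so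
`‖∫₀ᵗ σ(x_s) u(s) ds‖ ≥ μ/4`, and Cauchy–Schwarz gives `μ²/16 ≤ M_μ t ∫₀ᵗ |u|²`.
-/

lemma frobSq_nonneg {d m : ℕ} (M : Matrix (Fin d) (Fin m) ℝ) : 0 ≤ frobSq M := by
  unfold frobSq; positivity

lemma norm_matVec_le {d m : ℕ} (M : Matrix (Fin d) (Fin m) ℝ) (v : Vec m) :
    ‖matVec M v‖ ≤ frobNorm M * ‖v‖ := by
  have hsq : ‖matVec M v‖ ^ 2 ≤ frobSq M * ‖v‖ ^ 2 := by
    rw [EuclideanSpace.real_norm_sq_eq, EuclideanSpace.real_norm_sq_eq, frobSq, Finset.sum_mul]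
    refine Finset.sum_le_sum fun i _ => ?_
    show (∑ j, M i j * v j) ^ 2 ≤ _
    exact Finset.sum_mul_sq_le_sq_mul_sq Finset.univ (M i) fun j => v j
  rw [frobNorm, ← Real.sqrt_sq (norm_nonneg v), ← Real.sqrt_mul (frobSq_nonneg M)]
  exact Real.le_sqrt_of_sq_le hsq

lemma LipCoeff.continuous_drift {d m : ℕ} {τ κ₁ : ℝ} {b : Hist τ d → Vec d}
    {σ' : Hist τ d → Matrix (Fin d) (Fin m) ℝ} (hlip : LipCoeff b σ' κ₁) : Continuous b := by
  refine (LipschitzWith.of_dist_le_mul (K := ⟨√κ₁, Real.sqrt_nonneg _⟩) fun φ ψ => ?_).continuous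
  have hsq : ‖b φ - b ψ‖ ^ 2 ≤ κ₁ * ‖φ - ψ‖ ^ 2 :=
    (le_add_of_nonneg_right (frobSq_nonneg _)).trans (hlip φ ψ)
  rw [dist_eq_norm, dist_eq_norm]
  show _ ≤ √κ₁ * _
  rw [← Real.sqrt_sq (norm_nonneg (φ - ψ)), ← Real.sqrt_mul' _ (sq_nonneg _)]
  exact Real.le_sqrt_of_sq_le hsq

lemma seg_apply {d : ℕ} {τ T : ℝ} (h : -τ ≤ T) (x : Traj τ T d) (t : ℝ) (v : Icc (-τ) (0:ℝ)) :
    seg h x t v = ev h x (t + v) := rfl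

lemma segF_apply {d : ℕ} (τ : ℝ) (x : C(ℝ, Vec d)) (t : ℝ) (v : Icc (-τ) (0:ℝ)) :
    segF τ x t v = x (t + v) := rfl

lemma continuous_seg {d : ℕ} {τ T : ℝ} (h : -τ ≤ T) (x : Traj τ T d) : Continuous (seg h x) :=
  (ContinuousMap.curry ⟨fun q : ℝ × Icc (-τ) (0:ℝ) => ev h x (q.1 + q.2), by
    unfold ev; fun_prop⟩).continuous

lemma continuous_segF {d : ℕ} (τ : ℝ) (x : C(ℝ, Vec d)) : Continuous (segF τ x) :=
  (ContinuousMap.curry ⟨fun q : ℝ × Icc (-τ) (0:ℝ) => x (q.1 + q.2), by fun_prop⟩).continuous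

namespace IsPeriodicSol

variable {d : ℕ} {τ p : ℝ} {b : Hist τ d → Vec d} {x : C(ℝ, Vec d)}

lemma apply_add_nat_mul (hx : IsPeriodicSol τ b x p) (n : ℕ) {t : ℝ} (ht : -τ ≤ t) :
    x (t + n * p) = x t := by
  induction n with
  | zero => simp
  | succ n ih =>
    have hnp : 0 ≤ n * p := mul_nonneg n.cast_nonneg hx.2.1.le
    rw [Nat.cast_succ, add_one_mul, ← add_assoc, hx.2.2 _ (by linarith), ih]

lemma segF_mem_orbit (hx : IsPeriodicSol τ b x p) {t : ℝ} (ht : 0 ≤ t) :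
    segF τ x t ∈ orbit τ x p := by
  have hp := hx.2.1
  set n := ⌊t / p⌋₊
  have hn : n * p ≤ t := (le_div_iff₀ hp).1 (Nat.floor_le (div_nonneg ht hp.le))
  have hn' : t < n * p + p := by
    have := Nat.lt_floor_add_one (t / p)
    rw [div_lt_iff₀ hp] at this; linarith
  refine ⟨t - n * p, ⟨by linarith, by linarith⟩, ContinuousMap.ext fun v => ?_⟩
  have hv : -τ ≤ t - n * p + v := by linarith [v.2.1]
  rw [segF_apply, segF_apply, ← hx.apply_add_nat_mul n hv]
  ring_nf

end IsPeriodicSol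

lemma IsDDESol.norm_sub_le {d : ℕ} {τ M : ℝ} {b : Hist τ d → Vec d} {x : C(ℝ, Vec d)}
    (hx : IsDDESol τ b x) (hb : Continuous b) (hM : ∀ s, 0 ≤ s → ‖b (segF τ x s)‖ ≤ M)
    {s t : ℝ} (hs : 0 ≤ s) (hst : s ≤ t) : ‖x t - x s‖ ≤ M * (t - s) := by
  have hint : ∀ a c : ℝ, IntervalIntegrable (fun r => b (segF τ x r)) volume a c :=
    fun _ _ => (hb.comp (continuous_segF τ x)).intervalIntegrable _ _
  rw [hx t (hs.trans hst), hx s hs, add_sub_add_left_eq_sub,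
    intervalIntegral.integral_interval_sub_left (hint 0 t) (hint 0 s)]
  refine (intervalIntegral.norm_integral_le_of_norm_le_const fun r hr => ?_).trans_eq
    (by rw [abs_of_nonneg (sub_nonneg.2 hst)])
  rw [uIoc_of_le hst] at hr
  exact hM r (hs.trans hr.1.le)

lemma dist_seg_segF_le {d : ℕ} {τ T : ℝ} (h : -τ ≤ T) (x : Traj τ T d) (y : C(ℝ, Vec d))
    {t₀ s A B : ℝ} (hs : 0 ≤ s) (hA : ∀ w ∈ Icc 0 s, ‖ev h x w - ev h x 0‖ ≤ A)
    (hB : ∀ w ∈ Icc 0 s, ‖y (t₀ + w) - y t₀‖ ≤ B) :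
    dist (seg h x s) (segF τ y (t₀ + s)) ≤ dist (seg h x 0) (segF τ y t₀) + A + B := by
  have hA0 : 0 ≤ A := (norm_nonneg _).trans (hA 0 ⟨le_rfl, hs⟩)
  have hB0 : 0 ≤ B := (norm_nonneg _).trans (hB 0 ⟨le_rfl, hs⟩)
  rw [dist_eq_norm]
  refine (ContinuousMap.norm_le _ (by positivity)).2 fun v => ?_
  rw [ContinuousMap.sub_apply, seg_apply, segF_apply, add_assoc, ← dist_eq_norm]
  by_cases hv : s + v ≤ 0
  · have hw : s + v ∈ Icc (-τ) (0:ℝ) := ⟨by linarith [v.2.1], hv⟩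
    have := ContinuousMap.dist_apply_le_dist (f := seg h x 0) (g := segF τ y t₀) ⟨s + v, hw⟩
    simp only [seg_apply, segF_apply, zero_add] at this
    linarith
  · have h0 : (0:ℝ) ∈ Icc (-τ) (0:ℝ) := ⟨v.2.1.trans v.2.2, le_rfl⟩
    have hx0 := ContinuousMap.dist_apply_le_dist (f := seg h x 0) (g := segF τ y t₀) ⟨0, h0⟩
    simp only [seg_apply, segF_apply, add_zero] at hx0
    have hw : s + v ∈ Icc 0 s := ⟨by linarith, by linarith [v.2.2]⟩
    calc dist (ev h x (s + v)) (y (t₀ + (s + v)))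
        ≤ dist (ev h x (s + v)) (ev h x 0) + dist (ev h x 0) (y t₀) +
            dist (y t₀) (y (t₀ + (s + v))) := dist_triangle4 _ _ _ _
      _ ≤ A + dist (seg h x 0) (segF τ y t₀) + B := by
        have hxw : dist (ev h x (s + v)) (ev h x 0) ≤ A := (dist_eq_norm _ _).trans_le (hA _ hw)
        have hyw : dist (y t₀) (y (t₀ + (s + v))) ≤ B := by
          rw [dist_comm, dist_eq_norm]; exact hB _ hw
        linarith
      _ = _ := by ring

lemma IsPeriodicSol.infDist_seg_le {d : ℕ} {τ T p M : ℝ} {b : Hist τ d → Vec d}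
    {y : C(ℝ, Vec d)} (hy : IsPeriodicSol τ b y p) (hb : Continuous b)
    (hM : ∀ s, 0 ≤ s → ‖b (segF τ y s)‖ ≤ M) (h : -τ ≤ T) (x : Traj τ T d) {s A : ℝ}
    (hs : 0 ≤ s) (hA : ∀ w ∈ Icc 0 s, ‖ev h x w - ev h x 0‖ ≤ A) :
    infDist (seg h x s) (orbit τ y p) ≤ infDist (seg h x 0) (orbit τ y p) + A + M * s := by
  have hM0 : 0 ≤ M := (norm_nonneg _).trans (hM 0 le_rfl)
  have hne : (orbit τ y p).Nonempty := ⟨_, hy.segF_mem_orbit le_rfl⟩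
  suffices ∀ z ∈ orbit τ y p, infDist (seg h x s) (orbit τ y p) - A - M * s ≤ dist (seg h x 0) z by
    linarith [(le_infDist hne).2 this]
  rintro _ ⟨t₀, ht₀, rfl⟩
  have hmove : ∀ w ∈ Icc 0 s, ‖y (t₀ + w) - y t₀‖ ≤ M * s := fun w hw =>
    (hy.1.norm_sub_le hb hM ht₀.1 (le_add_of_nonneg_right hw.1)).trans (by
      rw [add_sub_cancel_left]; exact mul_le_mul_of_nonneg_left hw.2 hM0)
  have := (infDist_le_dist_of_mem (hy.segF_mem_orbit (add_nonneg ht₀.1 hs))).trans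
    (dist_seg_segF_le h x y hs hA hmove)
  linarith

lemma exists_first_hit {f : ℝ → ℝ} {a b c : ℝ} (hab : a ≤ b) (hf : ContinuousOn f (Icc a b))
    (ha : f a ≤ c) (hb : c ≤ f b) : ∃ t ∈ Icc a b, f t = c ∧ ∀ s ∈ Ico a t, f s < c := by
  set A := Icc a b ∩ f ⁻¹' Ici c
  have hA : IsCompact A := isCompact_Icc.of_isClosed_subset
    (hf.preimage_isClosed_of_isClosed isClosed_Icc isClosed_Ici) inter_subset_left
  have ht : sInf A ∈ A := hA.sInf_mem ⟨b, ⟨hab, le_rfl⟩, hb⟩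
  have hbefore : ∀ s ∈ Ico a (sInf A), f s < c := fun s hs => not_le.1 fun hcs =>
    (csInf_le hA.bddBelow ⟨⟨hs.1, hs.2.le.trans ht.1.2⟩, hcs⟩).not_gt hs.2
  obtain ⟨s, hs, hfs⟩ := intermediate_value_Icc ht.1.1 (hf.mono (Icc_subset_Icc_right ht.1.2))
    ⟨ha, ht.2⟩
  have hst : s = sInf A :=
    le_antisymm hs.2 (csInf_le hA.bddBelow ⟨⟨hs.1, hs.2.trans ht.1.2⟩, hfs.ge⟩)
  exact ⟨sInf A, ht.1, hst ▸ hfs, hbefore⟩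

lemma sq_intervalIntegral_le {g : ℝ → ℝ} {a b : ℝ} (hab : a ≤ b)
    (hg : IntervalIntegrable g volume a b)
    (hg2 : IntervalIntegrable (fun s => g s ^ 2) volume a b) :
    (∫ s in a..b, g s) ^ 2 ≤ (b - a) * ∫ s in a..b, g s ^ 2 := by
  rcases hab.eq_or_lt with rfl | hlt
  · simp
  have jensen := (Even.convexOn_pow (𝕜 := ℝ) even_two).map_set_average_le
    (continuous_pow 2).continuousOn isClosed_univ (by simp [uIoc_of_le hab, hlt])
    (by simp [uIoc_of_le hab])
    (Filter.Eventually.of_forall fun _ => mem_univ _) hg.def' hg2.def'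
  rw [interval_average_eq_div, interval_average_eq_div, div_pow, div_le_div_iff₀ (by positivity)
    (sub_pos.2 hlt)] at jensen
  nlinarith [sub_pos.2 hlt]

lemma MemLp.intervalIntegrable_norm_sq {m : ℕ} {u : ℝ → Vec m} {a b : ℝ} (hab : a ≤ b)
    (hu : MemLp u 2 (volume.restrict (Icc a b))) :
    IntervalIntegrable (fun s => ‖u s‖ ^ 2) volume a b :=
  (intervalIntegrable_iff_integrableOn_Icc_of_le hab).2 (hu.integrable_norm_pow two_ne_zero)

lemma norm_integral_matVec_sq_le {d m : ℕ} {σ : ℝ → Matrix (Fin d) (Fin m) ℝ} {u : ℝ → Vec m}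
    {M t : ℝ} (ht : 0 ≤ t) (hσ : ∀ s ∈ Icc 0 t, frobSq (σ s) ≤ M)
    (hu : MemLp u 2 (volume.restrict (Icc 0 t))) :
    ‖∫ s in 0..t, matVec (σ s) (u s)‖ ^ 2 ≤ M * t * ∫ s in 0..t, ‖u s‖ ^ 2 := by
  have hM : 0 ≤ M := (frobSq_nonneg _).trans (hσ 0 ⟨le_rfl, ht⟩)
  have hu1 : IntervalIntegrable (fun s => ‖u s‖) volume 0 t :=
    (intervalIntegrable_iff_integrableOn_Icc_of_le ht).2 (hu.integrable one_le_two).norm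
  have hpt : ∀ s ∈ Ioc 0 t, ‖matVec (σ s) (u s)‖ ≤ √M * ‖u s‖ := fun s hs =>
    (norm_matVec_le _ _).trans <| mul_le_mul_of_nonneg_right
      (Real.sqrt_le_sqrt (hσ s (Ioc_subset_Icc_self hs))) (norm_nonneg _)
  calc ‖∫ s in 0..t, matVec (σ s) (u s)‖ ^ 2
      ≤ (∫ s in 0..t, √M * ‖u s‖) ^ 2 := by
        gcongr
        exact intervalIntegral.norm_integral_le_of_norm_le ht (.of_forall hpt) (hu1.const_mul _)
    _ = M * (∫ s in 0..t, ‖u s‖) ^ 2 := by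
        rw [intervalIntegral.integral_const_mul, mul_pow, Real.sq_sqrt hM]
    _ ≤ M * (t * ∫ s in 0..t, ‖u s‖ ^ 2) := by
        gcongr
        simpa using sq_intervalIntegral_le ht hu1 (MemLp.intervalIntegrable_norm_sq ht hu)
    _ = M * t * ∫ s in 0..t, ‖u s‖ ^ 2 := by ring

lemma sq_le_mul_integral_of_mem_controls {d m : ℕ} {τ T M t r : ℝ} {h : -τ ≤ T}
    {b : Hist τ d → Vec d} {σ' : Hist τ d → Matrix (Fin d) (Fin m) ℝ} {x : Traj τ T d}
    {u : ℝ → Vec m} (hu : u ∈ controls h b σ' x) (ht : t ∈ Icc 0 T)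
    (hbσ : ∀ s ∈ Icc 0 t, ‖b (seg h x s)‖ + frobSq (σ' (seg h x s)) ≤ M)
    (hr : 0 ≤ r) (hdisp : r + M * t ≤ ‖ev h x t - ev h x 0‖) :
    r ^ 2 ≤ M * t * ∫ s in 0..t, ‖u s‖ ^ 2 := by
  have hdrift : ‖∫ s in 0..t, b (seg h x s)‖ ≤ M * t := by
    refine (intervalIntegral.norm_integral_le_of_norm_le_const fun s hs => ?_).trans_eq
      (by rw [sub_zero, abs_of_nonneg ht.1])
    rw [uIoc_of_le ht.1] at hs
    linarith [hbσ s (Ioc_subset_Icc_self hs), frobSq_nonneg (σ' (seg h x s))]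
  have hcontrol : r ≤ ‖∫ s in 0..t, matVec (σ' (seg h x s)) (u s)‖ := by
    have := norm_add_le (∫ s in 0..t, b (seg h x s)) (∫ s in 0..t, matVec (σ' (seg h x s)) (u s))
    rw [← add_sub_cancel_left (ev h x 0) (_ + _), ← add_assoc, ← hu.2 t ht] at this
    linarith
  calc r ^ 2 ≤ ‖∫ s in 0..t, matVec (σ' (seg h x s)) (u s)‖ ^ 2 := by gcongr
    _ ≤ M * t * ∫ s in 0..t, ‖u s‖ ^ 2 :=
      norm_integral_matVec_sq_le ht.1
        (fun s hs => by linarith [hbσ s hs, norm_nonneg (b (seg h x s))])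
        (hu.1.mono_measure (Measure.restrict_mono (Icc_subset_Icc_right ht.2) le_rfl))

lemma ofReal_sq_div_le_rate {d m : ℕ} {τ S M t r : ℝ} {h : -τ ≤ S} {b : Hist τ d → Vec d}
    {σ' : Hist τ d → Matrix (Fin d) (Fin m) ℝ} {x : Traj τ S d} (ht : t ∈ Icc 0 S)
    (hbσ : ∀ s ∈ Icc 0 t, ‖b (seg h x s)‖ + frobSq (σ' (seg h x s)) ≤ M)
    (hr : 0 ≤ r) (hdisp : r + M * t ≤ ‖ev h x t - ev h x 0‖) :
    ENNReal.ofReal (r ^ 2 / (2 * M * S)) ≤ rate h b σ' x := by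
  have hM : 0 ≤ M := by
    linarith [hbσ 0 ⟨le_rfl, ht.1⟩, norm_nonneg (b (seg h x 0)), frobSq_nonneg (σ' (seg h x 0))]
  have hS : 0 ≤ S := ht.1.trans ht.2
  refine le_iInf₂ fun u hu => ENNReal.ofReal_le_ofReal ?_
  have hIt : 0 ≤ ∫ s in 0..t, ‖u s‖ ^ 2 :=
    intervalIntegral.integral_nonneg ht.1 fun _ _ => sq_nonneg _
  have hmono : ∫ s in 0..t, ‖u s‖ ^ 2 ≤ ∫ s in 0..S, ‖u s‖ ^ 2 :=
    intervalIntegral.integral_mono_interval le_rfl ht.1 ht.2 (.of_forall fun _ => sq_nonneg _)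
      (MemLp.intervalIntegrable_norm_sq hS hu.1)
  refine div_le_of_le_mul₀ (by positivity) (by linarith) ?_
  calc r ^ 2 ≤ M * t * ∫ s in 0..t, ‖u s‖ ^ 2 :=
        sq_le_mul_integral_of_mem_controls hu ht hbσ hr hdisp
    _ ≤ M * S * ∫ s in 0..S, ‖u s‖ ^ 2 := by gcongr; exact ht.2
    _ = 1 / 2 * (∫ s in 0..S, ‖u s‖ ^ 2) * (2 * M * S) := by ring

theorem stmt_15_general {d m : ℕ} {τ : ℝ}
    (b : Hist τ d → Vec d) (σ' : Hist τ d → Matrix (Fin d) (Fin m) ℝ)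
    {κ₁ : ℝ} (hlip : LipCoeff b σ' κ₁)
    (xs : C(ℝ, Vec d)) (p : ℝ) (hxs : IsPeriodicSol τ b xs p)
    (μ : ℝ) (hμ : 0 < μ)
    (Mμ : ℝ) (hMμ : 0 < Mμ)
    -- `|b(φ)| + |σ(φ)|² ≤ M_μ` on the closure of `𝐁(𝐎,2μ)`
    (hbd : ∀ φ : Hist τ d, infDist φ (orbit τ xs p) ≤ 2 * μ → ‖b φ‖ + frobSq (σ' φ) ≤ Mμ)
    (η : ℝ) (hη : 0 < η) (hημ : η < μ / 4)
    (S : ℝ) (hS : 0 < S) (hSμ : S < μ / (4 * Mμ)) (h : -τ ≤ S)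
    (x : Traj τ S d)
    (hx0 : infDist (seg h x 0) (orbit τ xs p) = μ)
    (hsup : 2 * μ - η ≤
      sSup ((fun s => infDist (seg h x s) (orbit τ xs p)) '' Icc (0:ℝ) S)) :
    ENNReal.ofReal (μ ^ 2 / (32 * S * Mμ)) ≤ rate h b σ' x := by
  set f := fun s => infDist (seg h x s) (orbit τ xs p)
  have hf : Continuous f := (continuous_infDist_pt _).comp (continuous_seg h x)
  have hSM : Mμ * S ≤ μ / 4 := by rw [lt_div_iff₀ (by positivity)] at hSμ; linarith
  have hb_orbit : ∀ s, 0 ≤ s → ‖b (segF τ xs s)‖ ≤ Mμ := fun s hs => by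
    have := hbd _ (by rw [infDist_zero_of_mem (hxs.segF_mem_orbit hs)]; positivity)
    linarith [frobSq_nonneg (σ' (segF τ xs s))]
  obtain ⟨s₁, hs₁, hfs₁⟩ : ∃ s₁ ∈ Icc 0 S, 2 * μ - η ≤ f s₁ := by
    obtain ⟨s₁, hs₁, hfs₁⟩ := (isCompact_Icc.image hf).sSup_mem ((nonempty_Icc.2 hS.le).image f)
    exact ⟨s₁, hs₁, hfs₁ ▸ hsup⟩
  obtain ⟨sc, hsc, hfsc, hbefore⟩ :=
    exists_first_hit hs₁.1 hf.continuousOn (by simp only [f, hx0]; linarith) hfs₁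
  have hscS : Mμ * sc ≤ Mμ * S := by gcongr; exact hsc.2.trans hs₁.2
  obtain ⟨t, ht, hdisp⟩ : ∃ t ∈ Icc 0 sc, μ / 2 ≤ ‖ev h x t - ev h x 0‖ := by
    by_contra! hsmall
    have := hxs.infDist_seg_le hlip.continuous_drift hb_orbit h x hsc.1 fun w hw => (hsmall w hw).le
    linarith
  have hnear : ∀ s ∈ Icc 0 t, ‖b (seg h x s)‖ + frobSq (σ' (seg h x s)) ≤ Mμ := fun s hs =>
    hbd _ <| by
      rcases (hs.2.trans ht.2).lt_or_eq with hlt | rfl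
      exacts [by linarith [hbefore s ⟨hs.1, hlt⟩], by linarith]
  have hMt : Mμ * t ≤ Mμ * sc := by gcongr; exact ht.2
  convert ofReal_sq_div_le_rate ⟨ht.1, ht.2.trans (hsc.2.trans hs₁.2)⟩ hnear
    (r := μ / 4) (by positivity) (by linarith) using 2
  ring

/-- key estimate of Lemma 6.6: a path starting on `𝐒(𝐎,μ)` that reaches
distance `2μ − η` from the orbit within a short time `S` has energy at least
`μ²/(32 S M_μ)`. -/
theorem stmt_15 {d m : ℕ} (hd : 0 < d) (hm : 0 < m) {τ : ℝ} (hτ : 0 < τ)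
    (b : Hist τ d → Vec d) (σ' : Hist τ d → Matrix (Fin d) (Fin m) ℝ)
    {κ₁ : ℝ} (hκ₁ : 0 < κ₁) (hlip : LipCoeff b σ' κ₁)
    (xs : C(ℝ, Vec d)) (p : ℝ) (hxs : IsPeriodicSol τ b xs p)
    (μ : ℝ) (hμ : 0 < μ)
    (Mμ : ℝ) (hMμ : 0 < Mμ)
    -- `|b(φ)| + |σ(φ)|² ≤ M_μ` on the closure of `𝐁(𝐎,2μ)`
    (hbd : ∀ φ : Hist τ d, infDist φ (orbit τ xs p) ≤ 2 * μ → ‖b φ‖ + frobSq (σ' φ) ≤ Mμ)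
    (η : ℝ) (hη : 0 < η) (hημ : η < μ / 4)
    (S : ℝ) (hS : 0 < S) (hSμ : S < μ / (4 * Mμ)) (h : -τ ≤ S)
    (x : Traj τ S d)
    (hx0 : infDist (seg h x 0) (orbit τ xs p) = μ)
    (hsup : 2 * μ - η ≤
      sSup ((fun s => infDist (seg h x s) (orbit τ xs p)) '' Icc (0:ℝ) S)) :
    ENNReal.ofReal (μ ^ 2 / (32 * S * Mμ)) ≤ rate h b σ' x :=
  stmt_15_general b σ' hlip xs p hxs μ hμ Mμ hMμ hbd η hη hημ S hS hSμ h x hx0 hsup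
end
end

section
/- Let T > 0, let F be a closed subset of C([-τ,T],ℝ^d), let 𝐊 ⊂ 𝐂, and for j ≥ 1 define f_j(x) = j·min(d_T(x,F), 1). Then liminf_{j→∞} inf_{φ∈𝐊} inf_{x ∈ C([-τ,T],ℝ^d)} { I_T^φ(x) + f_j(x) } ≥ lim_{η→0} inf_{φ∈𝐊} I_T^φ(F^η), where F^η = { x ∈ C([-τ,T],ℝ^d) : d_T(x,F) ≤ η } (the limit in η exists by monotonicity). -/
/-! Fix `η > 0`. A path with `d_T(x,F) > η` pays a penalty of at least `j·min(η,1)`, and a path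
with `d_T(x,F) ≤ η` costs at least `inf_{φ∈𝐊} I_T^φ(F^η)`; so the `j`-th penalized infimum dominates
`min (inf_{φ∈𝐊} I_T^φ(F^η)) (j·min(η,1))`, whose limit as `j → ∞` is `inf_{φ∈𝐊} I_T^φ(F^η)`. -/

open MeasureTheory Set Metric
open scoped ENNReal

noncomputable section

theorem ENNReal.liminf_min_ofReal_natCast_mul {L : ℝ≥0∞} {c : ℝ} (hc : 0 < c) :
    Filter.liminf (fun j : ℕ => min L (ENNReal.ofReal (j * c))) Filter.atTop = L := by
  have hpenalty : Filter.Tendsto (fun j : ℕ => ENNReal.ofReal (j * c)) Filter.atTop (nhds ⊤) :=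
    ENNReal.tendsto_ofReal_atTop.comp (tendsto_natCast_atTop_atTop.atTop_mul_const hc)
  simpa using (tendsto_const_nhds.min hpenalty).liminf_eq

theorem min_iInf_sublevel_le_iInf_add_penalty {ι X : Type*} (K : Set ι) (I : ι → X → ℝ≥0∞)
    (g : X → ℝ) {η : ℝ} (j : ℕ) :
    min (⨅ (i : ι) (_ : i ∈ K), ⨅ (x : X) (_ : g x ≤ η), I i x)
        (ENNReal.ofReal (j * min η 1)) ≤
      ⨅ (i : ι) (_ : i ∈ K), ⨅ (x : X), (I i x + ENNReal.ofReal (j * min (g x) 1)) := by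
  refine le_iInf₂ fun i hi => le_iInf fun x => ?_
  rcases le_or_gt (g x) η with hx | hx
  · exact (min_le_left _ _).trans <| ((iInf₂_le i hi).trans (iInf₂_le x hx)).trans le_self_add
  · refine (min_le_right _ _).trans <| le_trans ?_ le_add_self
    gcongr

theorem iSup_iInf_sublevel_le_liminf_iInf_add_penalty {ι X : Type*} (K : Set ι)
    (I : ι → X → ℝ≥0∞) (g : X → ℝ) :
    (⨆ (η : ℝ) (_ : 0 < η), ⨅ (i : ι) (_ : i ∈ K), ⨅ (x : X) (_ : g x ≤ η), I i x) ≤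
      Filter.liminf
        (fun j : ℕ => ⨅ (i : ι) (_ : i ∈ K), ⨅ (x : X), (I i x + ENNReal.ofReal (j * min (g x) 1)))
        Filter.atTop := by
  refine iSup₂_le fun η hη => ?_
  calc _ = _ := (ENNReal.liminf_min_ofReal_natCast_mul (lt_min hη one_pos)).symm
    _ ≤ _ := Filter.liminf_le_liminf (Filter.Eventually.of_forall
      (min_iInf_sublevel_le_iInf_add_penalty K I g)) (by isBoundedDefault) (by isBoundedDefault)

theorem stmt_16_general {d m : ℕ} {τ T : ℝ}
    (h : -τ ≤ T)
    (b : Hist τ d → Vec d) (σ' : Hist τ d → Matrix (Fin d) (Fin m) ℝ)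
    (F : Set (Traj τ T d))
    (K : Set (Hist τ d)) :
    (⨆ (η : ℝ) (_ : 0 < η),
        ⨅ (φ : Hist τ d) (_ : φ ∈ K), ⨅ (x : Traj τ T d) (_ : infDist x F ≤ η),
          rateAt h b σ' φ x) ≤
      Filter.liminf
        (fun j : ℕ =>
          ⨅ (φ : Hist τ d) (_ : φ ∈ K), ⨅ (x : Traj τ T d),
            (rateAt h b σ' φ x + ENNReal.ofReal (j * min (infDist x F) 1)))
        Filter.atTop :=
  iSup_iInf_sublevel_le_liminf_iInf_add_penalty K (rateAt h b σ') (infDist · F)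

/-- key step in the proof of the uniform LDP upper bound:
`liminf_{j→∞} inf_{φ∈𝐊} inf_x {I_T^φ(x) + f_j(x)} ≥ lim_{η→0} inf_{φ∈𝐊} I_T^φ(F^η)`, where
`f_j(x) = j (d_T(x,F) ∧ 1)` and `F^η = {x : d_T(x,F) ≤ η}` (the limit in `η` equals the
supremum over `η > 0` by monotonicity). -/
theorem stmt_16 {d m : ℕ} (hd : 0 < d) (hm : 0 < m) {τ T : ℝ} (hτ : 0 < τ) (hT : 0 < T)
    (h : -τ ≤ T)
    (b : Hist τ d → Vec d) (σ' : Hist τ d → Matrix (Fin d) (Fin m) ℝ)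
    (hb : Continuous b) (hσ : Continuous σ')
    (F : Set (Traj τ T d)) (hF : IsClosed F)
    (K : Set (Hist τ d)) :
    (⨆ (η : ℝ) (_ : 0 < η),
        ⨅ (φ : Hist τ d) (_ : φ ∈ K), ⨅ (x : Traj τ T d) (_ : infDist x F ≤ η),
          rateAt h b σ' φ x) ≤
      Filter.liminf
        (fun j : ℕ =>
          ⨅ (φ : Hist τ d) (_ : φ ∈ K), ⨅ (x : Traj τ T d),
            (rateAt h b σ' φ x + ENNReal.ofReal (j * min (infDist x F) 1)))
        Filter.atTop :=
  stmt_16_general h b σ' F K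
end
end
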